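/- For every tree T with 3n vertices (n ≥ 1), the vertex set of T can be partitioned into three sets of size n each, each carrying a tree structure whose every edge joins two vertices at distance at most 2 in T. -/

import Mathlib

/-!
Call a vertex set *square-connected* if it induces a connected subgraph of the square of
the tree `G`; such a set carries a spanning tree whose edges join vertices at distance at
most two.

A centroid `c` of `G` leaves components of size `< 2n`, so they can be grouped into two sides
`P`, `Q` of size at least `n`, each connected together with `c`. From a connected set `X ∋ c`
one can carve any number `0 < q < |X|` of vertices other than `c` so that the carved part and
the rest are both square-connected and the carved part contains a neighbour of `c`: split off
the component `Y` of `X - c` at a neighbour `c'` of `c` and recurse on `X \ Y` (if `|Y| < q`)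
or on `Y` at `c'` (if `|Y| > q`), gluing pieces at distance two through `c` or `c'`. Carving
`n` vertices from `P ∪ {c}` and from `Q ∪ {c}` leaves `n` vertices, square-connected
through `c`.
-/

namespace SimpleGraph

variable {V : Type*} (G : SimpleGraph V)

-- Phrased with walks rather than `G.dist`, which is `0` between unreachable vertices.
def square : SimpleGraph V where
  Adj u v := u ≠ v ∧ ∃ p : G.Walk u v, p.length ≤ 2
  symm := ⟨fun _ _ ⟨hne, p, hp⟩ => ⟨hne.symm, p.reverse, by simpa using hp⟩⟩
  loopless := ⟨fun _ h => h.1 rfl⟩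

def AdjClosedIn (S P : Set V) : Prop :=
  ∀ ⦃x y⦄, x ∈ P → y ∈ S → G.Adj x y → y ∈ P

def IsComponentIn (S : Set V) (Z : Finset V) : Prop :=
  Maximal (fun Z : Finset V => (Z : Set V) ⊆ S ∧ (G.induce (Z : Set V)).Connected) Z

variable {G}

lemma le_square : G ≤ G.square :=
  fun _ _ h => ⟨h.ne, h.toWalk, by simp⟩

lemma square_adj_of_adj_of_adj {u v w : V} (huv : G.Adj u v) (hvw : G.Adj v w) (huw : u ≠ w) :
    G.square.Adj u w :=
  ⟨huw, .cons huv hvw.toWalk, by simp⟩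

lemma dist_le_two_of_square_adj {u v : V} (h : G.square.Adj u v) : G.dist u v ≤ 2 :=
  let ⟨_, p, hp⟩ := h
  (dist_le p).trans hp

lemma Connected.induce_square {s : Set V} (h : (G.induce s).Connected) :
    (G.square.induce s).Connected :=
  h.mono fun _ _ hab => le_square hab

lemma exists_adj_mem_diff_of_induce_preconnected {X Z : Set V}
    (hX : (G.induce X).Preconnected) {z x : V} (hz : z ∈ Z) (hzX : z ∈ X) (hx : x ∈ X)
    (hxZ : x ∉ Z) : ∃ a ∈ Z, ∃ b ∈ X \ Z, G.Adj a b := by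
  obtain ⟨p⟩ := hX ⟨z, hzX⟩ ⟨x, hx⟩
  obtain ⟨d, -, hda, hdb⟩ := p.exists_boundary_dart {u | u.1 ∈ Z} hz hxZ
  exact ⟨_, hda, _, ⟨d.snd.2, hdb⟩, d.adj⟩

namespace AdjClosedIn

variable {S P Q : Set V}

lemma diff (h : G.AdjClosedIn S P) : G.AdjClosedIn S (S \ P) :=
  fun _ _ hx hy hxy => ⟨hy, fun hyP => hx.2 (h hyP hx.1 hxy.symm)⟩

lemma union (hP : G.AdjClosedIn S P) (hQ : G.AdjClosedIn S Q) : G.AdjClosedIn S (P ∪ Q) :=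
  fun _ _ hx hy hxy => hx.imp (hP · hy hxy) (hQ · hy hxy)

lemma subset_of_preconnected (h : G.AdjClosedIn S P) {Z : Set V} (hZS : Z ⊆ S)
    (hZ : (G.induce Z).Preconnected) {z : V} (hz : z ∈ Z) (hzP : z ∈ P) : Z ⊆ P := by
  intro w hw
  by_contra hwP
  obtain ⟨a, haP, b, ⟨hbZ, hbP⟩, hab⟩ :=
    exists_adj_mem_diff_of_induce_preconnected hZ hzP hz hw hwP
  exact hbP (h haP (hZS hbZ) hab)

end AdjClosedIn

lemma IsComponentIn.subset {S : Set V} {Z : Finset V} (h : G.IsComponentIn S Z) :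
    (Z : Set V) ⊆ S :=
  h.prop.1

lemma IsComponentIn.connected {S : Set V} {Z : Finset V} (h : G.IsComponentIn S Z) :
    (G.induce (Z : Set V)).Connected :=
  h.prop.2

lemma IsComponentIn.adjClosedIn [DecidableEq V] {S : Set V} {Z : Finset V}
    (h : G.IsComponentIn S Z) : G.AdjClosedIn S Z := by
  intro x y hx hy hxy
  have hins : ((insert y Z : Finset V) : Set V) ⊆ S ∧
      (G.induce ((insert y Z : Finset V) : Set V)).Connected := by
    refine ⟨by simpa [Set.insert_subset_iff] using ⟨hy, h.subset⟩, ?_⟩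
    rw [Finset.coe_insert, Set.insert_eq, Set.union_comm]
    exact connected_induce_union h.connected.preconnected
      (by simp : (G.induce {y}).Connected).preconnected hx rfl hxy
  exact h.le_of_ge hins (Finset.subset_insert y Z) (Finset.mem_insert_self y Z)

lemma exists_le_isComponentIn {S : Set V} (hS : S.Finite) {Z : Finset V} (hZS : (Z : Set V) ⊆ S)
    (hZ : (G.induce (Z : Set V)).Connected) : ∃ C, Z ⊆ C ∧ G.IsComponentIn S C := by
  set 𝒞 := {C : Finset V | (C : Set V) ⊆ S ∧ (G.induce (C : Set V)).Connected}
  have h𝒞 : 𝒞.Finite :=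
    (hS.finite_subsets.preimage Finset.coe_injective.injOn).subset fun _ hC => hC.1
  exact h𝒞.exists_le_maximal ⟨hZS, hZ⟩

lemma exists_mem_isComponentIn {S : Set V} (hS : S.Finite) {y : V} (hy : y ∈ S) :
    ∃ C, y ∈ C ∧ G.IsComponentIn S C := by
  obtain ⟨C, hyC, hC⟩ := G.exists_le_isComponentIn hS (Z := {y}) (by simpa using hy)
    (by rw [Finset.coe_singleton]; simp)
  exact ⟨C, Finset.singleton_subset_iff.1 hyC, hC⟩

lemma connected_induce_insert_of_adjClosedIn {X P : Set V} (hX : (G.induce X).Connected)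
    {c : V} (hc : c ∈ X) (hPX : P ⊆ X \ {c}) (hP : G.AdjClosedIn (X \ {c}) P) :
    (G.induce (insert c P)).Connected := by
  have reach : ∀ {a b : X} (p : (G.induce X).Walk a b), b.1 = c → (ha : a.1 ∈ P) →
      (G.induce (insert c P)).Reachable ⟨a, .inr ha⟩ ⟨c, .inl rfl⟩ := by
    intro a b p
    induction p with
    | nil => rintro rfl ha; exact absurd rfl (hPX ha).2
    | @cons a b d hab p ih =>
      intro hd ha
      by_cases hbc : b.1 = c
      · exact Adj.reachable (show G.Adj a.1 c from hbc ▸ hab)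
      · have hbP : b.1 ∈ P := hP ha ⟨b.2, hbc⟩ hab
        exact (show (G.induce (insert c P)).Adj ⟨a.1, .inr ha⟩ ⟨b.1, .inr hbP⟩ from hab)
          |>.reachable.trans (ih hd hbP)
  rw [connected_iff_exists_forall_reachable]
  refine ⟨⟨c, .inl rfl⟩, fun ⟨v, hv⟩ => ?_⟩
  rcases hv with rfl | hvP
  · rfl
  · obtain ⟨p⟩ := hX.preconnected ⟨v, (hPX hvP).1⟩ ⟨c, hc⟩
    exact (reach p rfl hvP).symm

lemma exists_connected_split_of_adj [DecidableEq V] {X : Finset V}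
    (hX : (G.induce (X : Set V)).Connected) {c c' : V} (hc : c ∈ X) (hc' : c' ∈ X)
    (hcc' : G.Adj c c') :
    ∃ Y ⊆ X.erase c, c' ∈ Y ∧ (G.induce (Y : Set V)).Connected ∧
      (G.induce ((X \ Y : Finset V) : Set V)).Connected := by
  obtain ⟨Y, hc'Y, hY⟩ := G.exists_mem_isComponentIn (X.finite_toSet.sdiff (t := {c}))
    ⟨hc', hcc'.ne'⟩
  have hYX : Y ⊆ X.erase c := fun v hv => by simpa [and_comm] using hY.subset hv
  have hcY : c ∉ Y := fun h => by simpa using hYX h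
  have hXY : ((X \ Y : Finset V) : Set V) = insert c ((↑X \ {c}) \ ↑Y) := by
    ext v
    by_cases hv : v = c <;> simp [hv, hc, hcY]
  refine ⟨Y, hYX, hc'Y, hY.connected, ?_⟩
  rw [hXY]
  exact connected_induce_insert_of_adjClosedIn hX hc Set.sdiff_subset hY.adjClosedIn.diff

theorem exists_square_connected_split [DecidableEq V] {X : Finset V}
    (hX : (G.induce (X : Set V)).Connected) {c : V} (hc : c ∈ X) {q : ℕ} (hq : 0 < q)
    (hqX : q < X.card) :
    ∃ A ⊆ X.erase c, A.card = q ∧ (G.square.induce (A : Set V)).Connected ∧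
      (G.square.induce ((X \ A : Finset V) : Set V)).Connected ∧ ∃ z ∈ A, G.Adj c z := by
  induction hXn : X.card using Nat.strong_induction_on generalizing X c q with
  | _ N ih =>
  subst hXn
  obtain ⟨x, hx, hxc⟩ := X.exists_mem_ne (by omega) c
  obtain ⟨a, ha, c', ⟨hc'X, -⟩, hcc'⟩ :=
    exists_adj_mem_diff_of_induce_preconnected hX.preconnected (Set.mem_singleton c) hc hx hxc
  obtain rfl : c = a := ha.symm
  obtain ⟨Y, hYX, hc'Y, hY, hXY⟩ := exists_connected_split_of_adj hX hc hc'X hcc'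
  have hcY : c ∉ Y := fun h => by simpa using hYX h
  have hYcard : Y.card < X.card := Finset.card_lt_card ⟨hYX.trans (X.erase_subset c),
    fun h => hcY (h hc)⟩
  have hYpos : 0 < Y.card := Finset.card_pos.2 ⟨c', hc'Y⟩
  have hXYcard : (X \ Y).card = X.card - Y.card :=
    Finset.card_sdiff_of_subset (hYX.trans (X.erase_subset c))
  rcases lt_trichotomy q Y.card with hlt | rfl | hgt
  · obtain ⟨A, hAY, hAcard, hA, hYA, z, hzA, hc'z⟩ :=
      ih Y.card hYcard hY hc'Y (q := Y.card - q) (by omega) (by omega) rfl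
    have hAY' : A ⊆ Y := hAY.trans (Y.erase_subset c')
    have hcz : c ≠ z := fun h => hcY (h ▸ hAY' hzA)
    refine ⟨Y \ A, Finset.sdiff_subset.trans hYX, ?_, hYA, ?_, c', ?_, hcc'⟩
    · rw [Finset.card_sdiff_of_subset hAY']
      omega
    · rw [Finset.sdiff_sdiff_eq_sdiff_union (hAY'.trans (hYX.trans (X.erase_subset c))),
        Finset.coe_union]
      exact connected_induce_union hXY.induce_square.preconnected hA.preconnected
        (Finset.mem_sdiff.2 ⟨hc, hcY⟩) hzA (square_adj_of_adj_of_adj hcc' hc'z hcz)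
    · exact Finset.mem_sdiff.2 ⟨hc'Y, fun h => by simpa using hAY h⟩
  · exact ⟨Y, hYX, rfl, hY.induce_square, hXY.induce_square, c', hc'Y, hcc'⟩
  · obtain ⟨A, hAc, hAcard, hA, hXYA, z, hzA, hcz⟩ :=
      ih (X \ Y).card (by omega) hXY (Finset.mem_sdiff.2 ⟨hc, hcY⟩) (q := q - Y.card)
        (by omega) (by omega) rfl
    have hAXY : A ⊆ X \ Y := hAc.trans ((X \ Y).erase_subset c)
    have hc'z : c' ≠ z := fun h => (Finset.mem_sdiff.1 (hAXY (h ▸ hzA))).2 hc'Y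
    refine ⟨Y ∪ A, Finset.union_subset hYX
      (hAc.trans (Finset.erase_subset_erase c Finset.sdiff_subset)), ?_, ?_, ?_, c', ?_, hcc'⟩
    · rw [Finset.card_union_of_disjoint
        (Finset.disjoint_left.2 fun v hvY hvA => (Finset.mem_sdiff.1 (hAXY hvA)).2 hvY)]
      omega
    · rw [Finset.coe_union]
      exact connected_induce_union hY.induce_square.preconnected hA.preconnected hc'Y hzA
        (square_adj_of_adj_of_adj hcc'.symm hcz hc'z)
    · rw [sdiff_sdiff_left] at hXYA
      exact hXYA
    · exact Finset.mem_union_left A hc'Y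

lemma IsAcyclic.disjoint_of_adj (hG : G.IsAcyclic) {u v : V} (huv : G.Adj u v) {S T : Set V}
    (hS : (G.induce S).Preconnected) (hT : (G.induce T).Preconnected) (huS : u ∈ S)
    (hvS : v ∉ S) (hvT : v ∈ T) (huT : u ∉ T) : Disjoint S T := by
  have reach : ∀ {R : Set V}, (G.induce R).Preconnected → u ∉ R ∨ v ∉ R →
      ∀ {a b : V}, a ∈ R → b ∈ R → (G.deleteEdges {s(u, v)}).Reachable a b := by
    intro R hR huvR a b ha hb
    refine (hR ⟨a, ha⟩ ⟨b, hb⟩).map ⟨Subtype.val, fun {x y} hxy => ?_⟩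
    simp only [deleteEdges_adj, Set.mem_singleton_iff, Sym2.eq_iff]
    refine ⟨hxy, ?_⟩
    rcases x with ⟨x, hx⟩
    rcases y with ⟨y, hy⟩
    rintro (⟨rfl, rfl⟩ | ⟨rfl, rfl⟩) <;> tauto
  refine Set.disjoint_left.2 fun w hwS hwT => isBridge_iff.1
    (isAcyclic_iff_forall_adj_isBridge.1 hG huv) ?_
  exact (reach hS (.inr hvS) huS hwS).trans (reach hT (.inl huT) hwT hvT)

lemma IsAcyclic.card_lt_of_isComponentIn [Fintype V] [DecidableEq V] (hG : G.IsAcyclic)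
    {c c' : V} {C Z : Finset V} (hC : G.IsComponentIn {c}ᶜ C)
    (hCbig : Fintype.card V < 2 * C.card) (hc'C : c' ∈ C) (hcc' : G.Adj c c')
    (hZ : (G.induce (Z : Set V)).Connected) (hc'Z : c' ∉ Z) :
    Z.card < C.card := by
  by_cases hZC : Disjoint Z C
  · have := Finset.card_union_of_disjoint hZC ▸ Finset.card_le_univ (Z ∪ C)
    omega
  obtain ⟨w, hwZ, hwC⟩ := Finset.not_disjoint_iff.1 hZC
  by_cases hcZ : c ∈ Z
  · have hcC : c ∉ (C : Set V) := fun h => hC.subset h rfl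
    exact absurd (hG.disjoint_of_adj hcc' hZ.preconnected hC.connected.preconnected hcZ hc'Z hc'C
      hcC) (by rwa [Finset.disjoint_coe])
  · have hZC' : Z ⊆ C := hC.adjClosedIn.subset_of_preconnected
      (fun v hv (hvc : v = c) => hcZ (hvc ▸ hv)) hZ.preconnected hwZ hwC
    exact Finset.card_lt_card ⟨hZC', fun h => hc'Z (h hc'C)⟩

theorem IsTree.exists_forall_two_mul_card_le [Fintype V] [DecidableEq V] (hG : G.IsTree) :
    ∃ c, ∀ Z : Finset V, c ∉ Z → (G.induce (Z : Set V)).Connected →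
      2 * Z.card ≤ Fintype.card V := by
  classical
  let M : V → ℕ := fun c =>
    (Finset.univ.filter fun Z : Finset V => c ∉ Z ∧ (G.induce (Z : Set V)).Connected).sup
      Finset.card
  obtain ⟨c, -, hc⟩ := Finset.univ.exists_min_image M
    (Finset.univ_nonempty_iff.2 hG.connected.nonempty)
  refine ⟨c, fun Z hcZ hZ => ?_⟩
  by_contra! hZbig
  obtain ⟨C, hZC, hC⟩ := G.exists_le_isComponentIn (Set.toFinite {c}ᶜ)
    (fun v hv (hvc : v = c) => hcZ (hvc ▸ hv)) hZ
  have hCbig : Fintype.card V < 2 * C.card := by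
    have := Finset.card_le_card hZC
    omega
  obtain ⟨z, hz⟩ := hZ.nonempty
  have hcC : c ∉ C := fun h => hC.subset h rfl
  obtain ⟨c', hc'C, b, ⟨-, hbC⟩, hc'b⟩ := exists_adj_mem_diff_of_induce_preconnected
    ((induceUnivIso G).connected_iff.2 hG.connected).preconnected (hZC hz) (Set.mem_univ z)
    (Set.mem_univ c) hcC
  obtain rfl : c = b := by
    by_contra hbc
    exact hbC (hC.adjClosedIn hc'C (Ne.symm hbc) hc'b)
  have hMC : M c' < C.card := by
    refine (Finset.sup_lt_iff (by rw [Nat.bot_eq_zero]; omega)).2 fun Z' hZ' => ?_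
    obtain ⟨hc'Z', hZ'⟩ := (Finset.mem_filter.1 hZ').2
    exact hG.isAcyclic.card_lt_of_isComponentIn hC hCbig hc'C hc'b.symm hZ' hc'Z'
  have hCM : C.card ≤ M c :=
    Finset.le_sup (f := Finset.card)
      (Finset.mem_filter.2 ⟨Finset.mem_univ C, hcC, hC.connected⟩)
  exact absurd (hc c' (Finset.mem_univ c')) (by omega)

lemma exists_adjClosedIn_card_mem_Ico [DecidableEq V] {S : Finset V} {n : ℕ} (hn : 0 < n)
    (hnS : n ≤ S.card)
    (hsmall : ∀ Z ⊆ S, (G.induce (Z : Set V)).Connected → Z.card < 2 * n) :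
    ∃ P ⊆ S, G.AdjClosedIn S P ∧ n ≤ P.card ∧ P.card < 2 * n := by
  classical
  obtain ⟨P, hP, hPmax⟩ :=
    (S.powerset.filter fun P : Finset V => G.AdjClosedIn S P ∧ P.card < 2 * n)
    |>.exists_max_image Finset.card ⟨∅, by simpa [AdjClosedIn] using hn⟩
  simp only [Finset.mem_filter, Finset.mem_powerset] at hP hPmax
  obtain ⟨hPS, hP, hP2n⟩ := hP
  by_contra! hno
  have hPn : P.card < n := by
    by_contra! h
    exact absurd (hno P hPS hP h) (by omega)
  obtain ⟨y, hyS, hyP⟩ : ∃ y ∈ S, y ∉ P := Finset.exists_of_ssubset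
    ⟨hPS, fun h => by have := Finset.card_le_card h; omega⟩
  obtain ⟨Z, hyZ, hZ⟩ := G.exists_mem_isComponentIn S.finite_toSet hyS
  have hZS : Z ⊆ S := fun v hv => hZ.subset hv
  have hPZ : Disjoint P Z := Finset.disjoint_right.2 fun w hwZ hwP =>
    hyP (hP.subset_of_preconnected hZ.subset hZ.connected.preconnected hwZ hwP hyZ)
  have hZn : Z.card < n := by
    by_contra! h
    exact absurd (hno Z hZS hZ.adjClosedIn h) (not_le.2 (hsmall Z hZS hZ.connected))
  have hPZcard : (P ∪ Z).card = P.card + Z.card := Finset.card_union_of_disjoint hPZ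
  have hZpos : 0 < Z.card := Finset.card_pos.2 ⟨y, hyZ⟩
  have := hPmax (P ∪ Z) ⟨Finset.union_subset hPS hZS,
    by simpa only [Finset.coe_union] using hP.union hZ.adjClosedIn, by omega⟩
  omega

theorem IsTree.exists_balanced_separation [Fintype V] [DecidableEq V] (hG : G.IsTree) {n : ℕ}
    (hn : 0 < n) (hcard : Fintype.card V = 3 * n) :
    ∃ c P, c ∉ P ∧ n ≤ P.card ∧ P.card < 2 * n ∧
      (G.induce ((insert c P : Finset V) : Set V)).Connected ∧
      (G.induce ((Finset.univ \ P : Finset V) : Set V)).Connected := by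
  obtain ⟨c, hc⟩ := hG.exists_forall_two_mul_card_le
  have hS : (Finset.univ.erase c).card = 3 * n - 1 := by
    rw [Finset.card_erase_of_mem (Finset.mem_univ c), Finset.card_univ, hcard]
  obtain ⟨P, hPS, hP, hPn, hP2n⟩ :=
    G.exists_adjClosedIn_card_mem_Ico (S := Finset.univ.erase c) hn (by omega)
      fun Z hZ hZconn => by
        have := hc Z (fun h => by simpa using hZ h) hZconn
        omega
  have hcP : c ∉ P := fun h => by simpa using hPS h
  have hU : (G.induce Set.univ).Connected := (induceUnivIso G).connected_iff.2 hG.connected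
  rw [Finset.coe_erase, Finset.coe_univ] at hP
  have hPc : (P : Set V) ⊆ Set.univ \ {c} := fun v hv => by simpa using hPS hv
  refine ⟨c, P, hcP, hPn, hP2n, ?_, ?_⟩
  · rw [Finset.coe_insert]
    exact connected_induce_insert_of_adjClosedIn hU (Set.mem_univ c) hPc hP
  · have : ((Finset.univ \ P : Finset V) : Set V) = insert c ((Set.univ \ {c}) \ P) := by
      ext v
      by_cases hv : v = c <;> simp [hv, hcP]
    rw [this]
    exact connected_induce_insert_of_adjClosedIn hU (Set.mem_univ c) Set.sdiff_subset hP.diff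

theorem IsTree.exists_square_connected_three_partition [Fintype V] [DecidableEq V]
    (hG : G.IsTree) {n : ℕ} (hn : 0 < n) (hcard : Fintype.card V = 3 * n) :
    ∃ A₁ A₂ : Finset V, Disjoint A₁ A₂ ∧ A₁.card = n ∧ A₂.card = n ∧
      (G.square.induce (A₁ : Set V)).Connected ∧ (G.square.induce (A₂ : Set V)).Connected ∧
      (G.square.induce ((Finset.univ \ (A₁ ∪ A₂) : Finset V) : Set V)).Connected := by
  obtain ⟨c, P, hcP, hPn, hP2n, hX₁, hX₂⟩ := hG.exists_balanced_separation hn hcard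
  obtain ⟨A₁, hA₁, hA₁card, hA₁conn, hR₁, -⟩ := exists_square_connected_split hX₁
    (Finset.mem_insert_self c P) hn (by rw [Finset.card_insert_of_notMem hcP]; omega)
  obtain ⟨A₂, hA₂, hA₂card, hA₂conn, hR₂, -⟩ := exists_square_connected_split hX₂
    (Finset.mem_sdiff.2 ⟨Finset.mem_univ c, hcP⟩) hn
    (by rw [Finset.card_sdiff_of_subset (Finset.subset_univ P), Finset.card_univ]; omega)
  rw [Finset.erase_insert hcP] at hA₁
  have hA₂' : ∀ v ∈ A₂, v ≠ c ∧ v ∉ P := fun v h => by simpa using hA₂ h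
  have hB : Finset.univ \ (A₁ ∪ A₂) = (insert c P \ A₁) ∪ ((Finset.univ \ P) \ A₂) := by
    ext v
    have := @hA₁ v
    have := hA₂' v
    simp only [Finset.mem_sdiff, Finset.mem_union, Finset.mem_insert, Finset.mem_univ, true_and]
    grind
  refine ⟨A₁, A₂, Finset.disjoint_left.2 fun v h₁ h₂ => (hA₂' v h₂).2 (hA₁ h₁),
    hA₁card, hA₂card, hA₁conn, hA₂conn, ?_⟩
  rw [hB, Finset.coe_union]
  exact induce_union_connected hR₁.preconnected hR₂.preconnected
    ⟨c, Finset.mem_sdiff.2 ⟨Finset.mem_insert_self c P, fun h => hcP (hA₁ h)⟩,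
      Finset.mem_sdiff.2
        ⟨Finset.mem_sdiff.2 ⟨Finset.mem_univ c, hcP⟩, fun h => (hA₂' c h).1 rfl⟩⟩

lemma exists_isTree_dist_le_two_of_connected_induce_square {S : Finset V}
    (hS : (G.square.induce (S : Set V)).Connected) :
    ∃ H : SimpleGraph {x // x ∈ S}, H.IsTree ∧
      ∀ u v : {x // x ∈ S}, H.Adj u v → G.dist u.1 v.1 ≤ 2 := by
  obtain ⟨H, hle, hH⟩ := hS.exists_isTree_le
  exact ⟨H, hH, fun u v huv => dist_le_two_of_square_adj (hle huv)⟩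

end SimpleGraph

open Finset SimpleGraph

/-- Every tree `G` with `3 * n` vertices (`n ≥ 1`) admits a partition of its
vertex set into three sets of size `n` each, each carrying a tree structure
all of whose edges join vertices at distance at most `2` in `G`. -/
theorem balanced_three_partition_dist_two {V : Type*} [Fintype V] [DecidableEq V]
    (G : SimpleGraph V) (hG : G.IsTree) (n : ℕ) (hn : 1 ≤ n)
    (hcard : Fintype.card V = 3 * n) :
    ∃ P : Fin 3 → Finset V,
      (∀ i j, i ≠ j → Disjoint (P i) (P j)) ∧
      Finset.univ.biUnion P = Finset.univ ∧
      (∀ i, (P i).card = n) ∧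
      (∀ i, ∃ H : SimpleGraph {x // x ∈ P i}, H.IsTree ∧
        ∀ u v : {x // x ∈ P i}, H.Adj u v → G.dist u.1 v.1 ≤ 2) := by
  obtain ⟨A₁, A₂, hA, hA₁, hA₂, hA₁conn, hA₂conn, hBconn⟩ :=
    hG.exists_square_connected_three_partition hn hcard
  set B := univ \ (A₁ ∪ A₂)
  have hA₁B : Disjoint A₁ B := disjoint_sdiff.mono_left subset_union_left
  have hA₂B : Disjoint A₂ B := disjoint_sdiff.mono_left subset_union_right
  have hB : B.card = n := by
    rw [card_sdiff_of_subset (subset_univ _), card_union_of_disjoint hA, card_univ]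
    omega
  refine ⟨![A₁, B, A₂], ?_, ?_, ?_, ?_⟩
  · intro i j hij
    fin_cases i <;> fin_cases j <;>
      simp [hA, hA₁B, hA₂B, hA.symm, hA₁B.symm, hA₂B.symm] at hij ⊢
  · ext v
    simp only [mem_biUnion, mem_univ, true_and, Fin.exists_fin_succ, Fin.isValue,
      Matrix.cons_val_zero, Matrix.cons_val_succ, mem_sdiff, mem_union, not_or,
      Matrix.cons_val_fin_one, exists_const, iff_true, B]
    tauto
  · intro i
    fin_cases i <;> assumption
  · intro i
    fin_cases i <;> exact exists_isTree_dist_le_two_of_connected_induce_square ‹_›
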